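/- Let p and a be integers with 0 < a < p. For every positive integer N the radial limit lim_{ε→0⁺} Σ_{k=0}^{∞} ψ_{2p}^{(a)}(k) · exp( 2πi(1/N + iε)·k²/(4p) ) exists and equals −Σ_{k=1}^{2pN} ψ_{2p}^{(a)}(k) · exp( πik²/(2pN) ) · B₁( k/(2pN) ). (That is, the Eichler integral Ψ̃_p^{(a)}(τ) = Σ_{k≥0} ψ_{2p}^{(a)}(k) q^{k²/(4p)} has the stated limiting value at τ = 1/N.) -/

import Mathlib

/-!
With `f k = ψ(k) e^{πik²/(2pN)}` the series is `∑ₖ f k e^{-tk²}` with `t = πε/(2p)`, and `f` is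
`2pN`-periodic and odd, hence has mean zero over a period. Summing by parts twice writes the series
as `A + ∑ₙ G(n) (dₙ - dₙ₊₁)`, where `dₙ = e^{-tn²} - e^{-t(n+1)²}`, `A` is the mean of the
(periodic) partial sums of `f`, and `G` is bounded. The sequence `d` is unimodal with maximum
`O(√t)`, so its total variation is `O(√t)` and the series tends to `A`. Since `f` has mean zero and
`f 0 = 0`, `A = -∑_{k=1}^{2pN} f(k) B₁(k/2pN)`.
-/

open Complex Finset Filter

/-- The 2p-periodic function `ψ_{2p}^{(a)}`. -/
def psi (p a k : ℤ) : ℤ :=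
  if k ≡ a [ZMOD 2 * p] then 1 else if k ≡ -a [ZMOD 2 * p] then -1 else 0

open Function Topology

section PeriodicSequences

variable {E : Type*}

theorem Function.Periodic.exists_norm_le [SeminormedAddCommGroup E] {f : ℕ → E} {M : ℕ}
    (hf : Periodic f M) (hM : 0 < M) : ∃ C, ∀ n, ‖f n‖ ≤ C :=
  ⟨∑ j ∈ range M, ‖f j‖, fun n => hf.map_mod_nat n ▸
    single_le_sum (fun j _ => norm_nonneg (f j)) (mem_range.2 (Nat.mod_lt n hM))⟩

theorem Function.Periodic.partialSums [AddCommMonoid E] {f : ℕ → E} {M : ℕ}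
    (hf : Periodic f M) (hsum : ∑ k ∈ range M, f k = 0) :
    Periodic (fun n => ∑ k ∈ range n, f k) M := by
  intro n
  induction n with
  | zero => simpa using hsum
  | succ n ih =>
    simp only [Nat.add_right_comm n 1 M, sum_range_succ, ih, hf n]

theorem sum_range_partialSums_add_sum_range_nsmul [AddCommMonoid E] (f : ℕ → E) (M : ℕ) :
    ∑ n ∈ range M, ∑ k ∈ range (n + 1), f k + ∑ k ∈ range M, k • f k =
      M • ∑ k ∈ range M, f k := by
  induction M with
  | zero => simp
  | succ M ih =>
    rw [sum_range_succ, sum_range_succ (fun k => k • f k),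
      sum_range_succ f M, add_add_add_comm, ih, succ_nsmul, smul_add]
    abel

end PeriodicSequences

section SummationByParts

variable {E : Type*} [NormedAddCommGroup E] [NormedSpace ℝ E] [CompleteSpace E]

theorem summable_smul_of_norm_le {w : ℕ → ℝ} (hw : Summable w) {u : ℕ → E} {C : ℝ}
    (hu : ∀ n, ‖u n‖ ≤ C) : Summable fun n => w n • u n :=
  Summable.of_norm_bounded (hw.norm.mul_right C) fun n => by
    rw [norm_smul]
    exact mul_le_mul_of_nonneg_left (hu n) (norm_nonneg _)

theorem tsum_smul_eq_tsum_sub_smul_partialSum {u : ℕ → E} {C : ℝ}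
    (hu : ∀ n, ‖∑ k ∈ range n, u k‖ ≤ C) {w : ℕ → ℝ} (hw : Summable w) :
    ∑' k, w k • u k = ∑' n, (w n - w (n + 1)) • ∑ k ∈ range (n + 1), u k := by
  have h₀ : Summable fun n => w n • ∑ j ∈ range n, u j := summable_smul_of_norm_le hw hu
  have h₁ : Summable fun n => w n • ∑ j ∈ range (n + 1), u j :=
    summable_smul_of_norm_le hw fun n => hu (n + 1)
  have h₂ : Summable fun n => w (n + 1) • ∑ j ∈ range (n + 1), u j :=
    summable_smul_of_norm_le ((summable_nat_add_iff 1).2 hw) fun n => hu (n + 1)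
  calc ∑' k, w k • u k
      = ∑' n, w n • ∑ j ∈ range (n + 1), u j - ∑' n, w n • ∑ j ∈ range n, u j := by
        rw [← h₁.tsum_sub h₀]
        simp only [← smul_sub, sum_range_succ_sub_sum]
    _ = ∑' n, w n • ∑ j ∈ range (n + 1), u j
          - ∑' n, w (n + 1) • ∑ j ∈ range (n + 1), u j := by
        rw [h₀.tsum_eq_zero_add, range_zero, sum_empty, smul_zero, zero_add]
    _ = _ := by
        rw [← h₁.tsum_sub h₂]
        simp only [sub_smul]

end SummationByParts

theorem sum_range_abs_sub_le_of_unimodal {d : ℕ → ℝ} {B : ℝ} (h₀ : ∀ k, 0 ≤ d k)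
    (hB : ∀ k, d k ≤ B) (hdec : ∀ k, d (k + 1) < d k → d (k + 2) < d (k + 1)) (n : ℕ) :
    ∑ k ∈ range n, |d (k + 1) - d k| ≤ 2 * B := by
  -- either `d` has been nondecreasing so far, or it is decreasing from now on
  have key : ∀ n, ∑ k ∈ range n, |d (k + 1) - d k| ≤ d n ∨
      (d (n + 1) < d n ∧ ∑ k ∈ range n, |d (k + 1) - d k| + d n ≤ 2 * B) := by
    intro n
    induction n with
    | zero => simp [h₀ 0]
    | succ n ih =>
      rw [sum_range_succ]
      by_cases hn : d (n + 1) < d n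
      · refine Or.inr ⟨hdec n hn, ?_⟩
        rw [abs_of_neg (sub_neg.2 hn)]
        rcases ih with ih | ih <;> linarith [hB n]
      · rcases ih with ih | ih
        · left
          rw [abs_of_nonneg (by linarith)]
          linarith
        · exact absurd ih.1 hn
  rcases key n with h | h <;> linarith [hB n, h₀ n]

noncomputable def gaussWeight (t : ℝ) (k : ℕ) : ℝ := Real.exp (-(t * k ^ 2))

section GaussWeight

variable {t : ℝ}

theorem gaussWeight_pos (t : ℝ) (k : ℕ) : 0 < gaussWeight t k := Real.exp_pos _

theorem gaussWeight_le_pow (ht : 0 ≤ t) (k : ℕ) : gaussWeight t k ≤ Real.exp (-t) ^ k := by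
  rw [gaussWeight, ← Real.exp_nat_mul, Real.exp_le_exp]
  have : (k : ℝ) ≤ (k : ℝ) ^ 2 := by exact_mod_cast Nat.le_self_pow two_ne_zero k
  nlinarith

theorem summable_gaussWeight (ht : 0 < t) : Summable (gaussWeight t) :=
  Summable.of_nonneg_of_le (fun k => (gaussWeight_pos t k).le) (gaussWeight_le_pow ht.le)
    (summable_geometric_of_lt_one (Real.exp_nonneg _) (Real.exp_lt_one_iff.2 (neg_lt_zero.2 ht)))

theorem gaussWeight_succ_le (ht : 0 ≤ t) (k : ℕ) : gaussWeight t (k + 1) ≤ gaussWeight t k := by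
  rw [gaussWeight, gaussWeight, Real.exp_le_exp, neg_le_neg_iff]
  gcongr
  exact Nat.le_succ k

theorem gaussWeight_succ (t : ℝ) (k : ℕ) :
    gaussWeight t (k + 1) = gaussWeight t k * Real.exp (-(t * (2 * k + 1))) := by
  rw [gaussWeight, gaussWeight, ← Real.exp_add]
  push_cast
  ring_nf

theorem tsum_gaussWeight_sub_succ (ht : 0 < t) :
    ∑' k, (gaussWeight t k - gaussWeight t (k + 1)) = 1 := by
  have h := summable_gaussWeight ht
  rw [h.tsum_sub ((summable_nat_add_iff 1).2 h), h.tsum_eq_zero_add]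
  simp [gaussWeight]

theorem mul_exp_neg_sq_le_one (x : ℝ) : x * Real.exp (-x ^ 2) ≤ 1 := by
  rw [Real.exp_neg, ← div_eq_mul_inv, div_le_one (Real.exp_pos _)]
  nlinarith [Real.add_one_le_exp (x ^ 2), sq_nonneg (x - 1)]

theorem gaussWeight_sub_succ_le (ht : 0 ≤ t) (k : ℕ) :
    gaussWeight t k - gaussWeight t (k + 1) ≤ 2 * √t + t := by
  have hg := gaussWeight_pos t k
  have hg₁ : gaussWeight t k ≤ 1 := Real.exp_le_one_iff.2 (by nlinarith [sq_nonneg (k : ℝ)])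
  have hdiff : 1 - Real.exp (-(t * (2 * k + 1))) ≤ t * (2 * k + 1) := by
    linarith [Real.add_one_le_exp (-(t * (2 * k + 1)))]
  -- `t k e^{-t k²} = √t · x e^{-x²}` with `x = √t k`
  have hpeak : t * k * gaussWeight t k ≤ √t := by
    have h := mul_le_mul_of_nonneg_left (mul_exp_neg_sq_le_one (√t * k)) (Real.sqrt_nonneg t)
    rwa [mul_pow, Real.sq_sqrt ht, ← mul_assoc, ← mul_assoc, Real.mul_self_sqrt ht, mul_one]
      at h
  calc gaussWeight t k - gaussWeight t (k + 1)
      = gaussWeight t k * (1 - Real.exp (-(t * (2 * k + 1)))) := by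
        rw [gaussWeight_succ]; ring
    _ ≤ gaussWeight t k * (t * (2 * k + 1)) := mul_le_mul_of_nonneg_left hdiff hg.le
    _ = 2 * (t * k * gaussWeight t k) + t * gaussWeight t k := by ring
    _ ≤ 2 * √t + t := by nlinarith

theorem gaussWeight_sub_succ_lt_of_lt (ht : 0 ≤ t) (k : ℕ)
    (h : gaussWeight t (k + 1) - gaussWeight t (k + 1 + 1) <
      gaussWeight t k - gaussWeight t (k + 1)) :
    gaussWeight t (k + 2) - gaussWeight t (k + 2 + 1) <
      gaussWeight t (k + 1) - gaussWeight t (k + 1 + 1) := by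
  set ρ := Real.exp (-(t * (2 * k + 1)))
  set c := Real.exp (-(2 * t))
  have hρ : 0 < ρ := Real.exp_pos _
  have hρ₁ : ρ ≤ 1 := Real.exp_le_one_iff.2 (by have : (0 : ℝ) ≤ k := k.cast_nonneg; nlinarith)
  have hc : 0 < c := Real.exp_pos _
  have hc₁ : c ≤ 1 := Real.exp_le_one_iff.2 (by linarith)
  have hg := gaussWeight_pos t k
  have e₁ : gaussWeight t (k + 1) = gaussWeight t k * ρ := gaussWeight_succ t k
  have e₂ : gaussWeight t (k + 1 + 1) = gaussWeight t k * (ρ ^ 2 * c) := by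
    simp only [gaussWeight, ρ, c, ← Real.exp_nat_mul, ← Real.exp_add]
    congr 1; push_cast; ring
  have e₃ : gaussWeight t (k + 2 + 1) = gaussWeight t k * (ρ ^ 3 * c ^ 3) := by
    simp only [gaussWeight, ρ, c, ← Real.exp_nat_mul, ← Real.exp_add]
    congr 1; push_cast; ring
  rw [e₁, e₂] at h
  rw [show k + 2 = k + 1 + 1 from rfl, e₁, e₂, e₃]
  have h' : 2 * ρ < 1 + ρ ^ 2 * c := by nlinarith
  -- multiply `h'` by `c` and use `(1 - c) (1 - ρ²c²) ≥ 0`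
  have key : 2 * ρ * c < 1 + ρ ^ 2 * c ^ 3 := by
    have hρc : ρ * c ≤ 1 := mul_le_one₀ hρ₁ hc.le hc₁
    nlinarith [mul_lt_mul_of_pos_left h' hc, mul_nonneg (mul_nonneg (sub_nonneg.2 hc₁)
      (sub_nonneg.2 hρc)) (add_nonneg zero_le_one (mul_pos hρ hc).le)]
  nlinarith [mul_pos hg hρ]

theorem tsum_abs_gaussWeight_sub_succ_sub_le (ht : 0 < t) :
    ∑' k, |(gaussWeight t (k + 1) - gaussWeight t (k + 1 + 1)) -
      (gaussWeight t k - gaussWeight t (k + 1))| ≤ 2 * (2 * √t + t) :=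
  Real.tsum_le_of_sum_range_le (fun _ => abs_nonneg _) <|
    sum_range_abs_sub_le_of_unimodal (fun k => sub_nonneg.2 (gaussWeight_succ_le ht.le k))
      (gaussWeight_sub_succ_le ht.le) (gaussWeight_sub_succ_lt_of_lt ht.le)

end GaussWeight

section GaussianLimit

variable {E : Type*} [NormedAddCommGroup E] [NormedSpace ℝ E] [CompleteSpace E]

theorem norm_tsum_gaussWeight_sub_succ_smul_le {e : ℕ → E} {C : ℝ}
    (he : ∀ n, ‖∑ k ∈ range n, e k‖ ≤ C) {t : ℝ} (ht : 0 < t) :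
    ‖∑' k, (gaussWeight t k - gaussWeight t (k + 1)) • e k‖ ≤ C * (2 * (2 * √t + t)) := by
  set d : ℕ → ℝ := fun k => gaussWeight t k - gaussWeight t (k + 1)
  have hd : Summable d :=
    (summable_gaussWeight ht).sub ((summable_nat_add_iff 1).2 (summable_gaussWeight ht))
  have hvar : Summable fun n => |d (n + 1) - d n| :=
    (((summable_nat_add_iff 1).2 hd).sub hd).abs
  have hC : 0 ≤ C := (norm_nonneg _).trans (he 0)
  rw [tsum_smul_eq_tsum_sub_smul_partialSum he hd]
  calc ‖∑' n, (d n - d (n + 1)) • ∑ k ∈ range (n + 1), e k‖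
      ≤ ∑' n, C * |d (n + 1) - d n| :=
        tsum_of_norm_bounded (hvar.mul_left C).hasSum fun n => by
          rw [norm_smul, Real.norm_eq_abs, abs_sub_comm, mul_comm]
          exact mul_le_mul_of_nonneg_right (he (n + 1)) (abs_nonneg _)
    _ ≤ C * (2 * (2 * √t + t)) := by
        rw [tsum_mul_left]
        exact mul_le_mul_of_nonneg_left (tsum_abs_gaussWeight_sub_succ_sub_le ht) hC

theorem exists_norm_tsum_gaussWeight_smul_sub_le {f : ℕ → E} {M : ℕ} (hM : 0 < M)
    (hf : Periodic f M) (hsum : ∑ k ∈ range M, f k = 0) :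
    ∃ C, ∀ t, 0 < t → ‖∑' k, gaussWeight t k • f k -
      -(M : ℝ)⁻¹ • ∑ k ∈ range M, (k : ℝ) • f k‖ ≤ C * (2 * (2 * √t + t)) := by
  set S : ℕ → E := fun n => ∑ k ∈ range n, f k
  set A := -(M : ℝ)⁻¹ • ∑ k ∈ range M, (k : ℝ) • f k
  have hS : Periodic S M := hf.partialSums hsum
  obtain ⟨C₁, hC₁⟩ := hS.exists_norm_le hM
  -- the partial sums, centred at their mean `A` over a period
  set e : ℕ → E := fun n => S (n + 1) - A
  have he : Periodic e M := fun n => by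
    simp only [e, Nat.add_right_comm n M 1, hS (n + 1)]
  have he_sum : ∑ n ∈ range M, e n = 0 := by
    have h := sum_range_partialSums_add_sum_range_nsmul f M
    rw [hsum, smul_zero] at h
    simp only [← Nat.cast_smul_eq_nsmul ℝ] at h
    have hMA : M • A = -∑ k ∈ range M, (k : ℝ) • f k := by
      rw [← Nat.cast_smul_eq_nsmul ℝ, smul_smul, mul_neg,
        mul_inv_cancel₀ (Nat.cast_ne_zero.2 hM.ne'), neg_smul, one_smul]
    rw [sum_sub_distrib, sum_const, card_range, hMA, sub_neg_eq_add]
    exact h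
  obtain ⟨C₂, hC₂⟩ := (he.partialSums he_sum).exists_norm_le hM
  refine ⟨C₂, fun t ht => ?_⟩
  set d : ℕ → ℝ := fun k => gaussWeight t k - gaussWeight t (k + 1)
  have hd : Summable d :=
    (summable_gaussWeight ht).sub ((summable_nat_add_iff 1).2 (summable_gaussWeight ht))
  have hde : Summable fun n => d n • e n :=
    summable_smul_of_norm_le hd fun n => (norm_sub_le _ _).trans (add_le_add (hC₁ (n + 1)) le_rfl)
  have habel : ∑' k, gaussWeight t k • f k = ∑' n, d n • e n + A := by
    rw [tsum_smul_eq_tsum_sub_smul_partialSum hC₁ (summable_gaussWeight ht)]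
    calc ∑' n, d n • S (n + 1) = ∑' n, (d n • e n + d n • A) := by simp [e, ← smul_add]
      _ = ∑' n, d n • e n + A := by
        rw [hde.tsum_add (hd.smul_const A), hd.tsum_smul_const, tsum_gaussWeight_sub_succ ht,
          one_smul]
  rw [habel, add_sub_cancel_right]
  exact norm_tsum_gaussWeight_sub_succ_smul_le hC₂ ht

theorem tendsto_tsum_gaussWeight_smul_of_periodic {f : ℕ → E} {M : ℕ} (hM : 0 < M)
    (hf : Periodic f M) (hsum : ∑ k ∈ range M, f k = 0) :
    Tendsto (fun t => ∑' k, gaussWeight t k • f k) (𝓝[>] 0)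
      (𝓝 (-(M : ℝ)⁻¹ • ∑ k ∈ range M, (k : ℝ) • f k)) := by
  obtain ⟨C, hC⟩ := exists_norm_tsum_gaussWeight_smul_sub_le hM hf hsum
  rw [tendsto_iff_norm_sub_tendsto_zero]
  refine squeeze_zero' (Eventually.of_forall fun _ => norm_nonneg _)
    (eventually_mem_nhdsWithin.mono hC) ?_
  have h : Tendsto (fun t => C * (2 * (2 * √t + t))) (𝓝 0)
      (𝓝 (C * (2 * (2 * √0 + 0)))) :=
    (by fun_prop : Continuous fun t => C * (2 * (2 * √t + t))).tendsto 0
  simpa using h.mono_left nhdsWithin_le_nhds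

end GaussianLimit

theorem sum_range_eq_zero_of_periodic_of_odd {F : ℤ → ℂ} {M : ℕ}
    (hper : Periodic F M) (hodd : ∀ k, F (-k) = -F k) :
    ∑ k ∈ range M, F k = 0 := by
  have hshift : ∑ k ∈ range M, F k = ∑ k ∈ range M, F ((k + 1 : ℕ) : ℤ) := by
    have h := (sum_range_succ (fun k : ℕ => F k) M).symm.trans
      (sum_range_succ' (fun k : ℕ => F k) M)
    rw [show F M = F 0 by simpa using hper 0] at h
    exact add_right_cancel h
  have hreflect : ∑ k ∈ range M, F ((k + 1 : ℕ) : ℤ) = -∑ k ∈ range M, F k := by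
    rw [← sum_range_reflect, ← sum_neg_distrib]
    refine sum_congr rfl fun k hk => ?_
    have hk := mem_range.1 hk
    rw [show ((M - 1 - k + 1 : ℕ) : ℤ) = -k + M by omega, hper, hodd]
  have h := hshift.trans hreflect
  linear_combination h / 2

theorem sum_Icc_mul_sub_half_eq {F : ℤ → ℂ} {M : ℕ} (hF₀ : F 0 = 0) (hFM : F M = 0)
    (hsum : ∑ k ∈ range M, F k = 0) :
    ∑ k ∈ Icc (1 : ℤ) M, F k * ((k : ℂ) / M - 1 / 2) =
      (M : ℂ)⁻¹ * ∑ k ∈ range M, (k : ℂ) * F k := by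
  have hIcc : ∑ k ∈ Icc (1 : ℤ) M, F k * ((k : ℂ) / M - 1 / 2) =
      ∑ k ∈ range M, F (k + 1 : ℕ) * (((k + 1 : ℕ) : ℂ) / M - 1 / 2) := by
    rw [Int.Icc_eq_finset_map, sum_map]
    simp [add_comm]
  have hshift := sum_range_succ' (fun k : ℕ => F k * ((k : ℂ) / M - 1 / 2)) M
  rw [sum_range_succ, Nat.cast_zero, hF₀, hFM, zero_mul, zero_mul, add_zero, add_zero] at hshift
  rw [hIcc, ← hshift]
  calc ∑ k ∈ range M, F k * ((k : ℂ) / M - 1 / 2)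
      = ∑ k ∈ range M, ((M : ℂ)⁻¹ * ((k : ℂ) * F k) - 1 / 2 * F k) :=
        sum_congr rfl fun k _ => by ring
    _ = (M : ℂ)⁻¹ * ∑ k ∈ range M, (k : ℂ) * F k - 1 / 2 * ∑ k ∈ range M, F k := by
        rw [sum_sub_distrib, mul_sum, mul_sum]
    _ = (M : ℂ)⁻¹ * ∑ k ∈ range M, (k : ℂ) * F k := by rw [hsum, mul_zero, sub_zero]

theorem psi_congr {p a k l : ℤ} (h : k ≡ l [ZMOD 2 * p]) : psi p a k = psi p a l := by
  have h₁ : k ≡ a [ZMOD 2 * p] ↔ l ≡ a [ZMOD 2 * p] := ⟨h.symm.trans, h.trans⟩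
  have h₂ : k ≡ -a [ZMOD 2 * p] ↔ l ≡ -a [ZMOD 2 * p] := ⟨h.symm.trans, h.trans⟩
  simp only [psi, h₁, h₂]

theorem psi_periodic (p a : ℤ) : Periodic (psi p a) (2 * p) :=
  fun _ => psi_congr Int.add_modEq_right

theorem psi_neg {p a : ℤ} (h : ¬a ≡ -a [ZMOD 2 * p]) (k : ℤ) : psi p a (-k) = -psi p a k := by
  have h₁ : -k ≡ a [ZMOD 2 * p] ↔ k ≡ -a [ZMOD 2 * p] :=
    ⟨fun h => by simpa using h.neg, fun h => by simpa using h.neg⟩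
  have h₂ : -k ≡ -a [ZMOD 2 * p] ↔ k ≡ a [ZMOD 2 * p] :=
    ⟨fun h => by simpa using h.neg, fun h => h.neg⟩
  simp only [psi, h₁, h₂]
  split_ifs with h₃ h₄ <;> first | rfl | exact absurd (h₄.symm.trans h₃) h

theorem not_modEq_neg_of_pos_of_lt {p a : ℤ} (ha : 0 < a) (hap : a < p) :
    ¬a ≡ -a [ZMOD 2 * p] := by
  intro h
  obtain ⟨c, hc⟩ := h.dvd
  rcases le_or_gt 0 c with hc₀ | hc₀ <;> nlinarith

noncomputable def psiTwist (p a : ℤ) (N : ℕ) (k : ℤ) : ℂ :=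
  (psi p a k : ℂ) * Complex.exp (Real.pi * Complex.I * (k : ℂ) ^ 2 / (2 * p * N))

theorem psiTwist_periodic {p : ℤ} (hp : p ≠ 0) (a : ℤ) {N : ℕ} (hN : N ≠ 0) :
    Periodic (psiTwist p a N) (2 * p * N) := by
  intro k
  have hpN : (2 * p * N : ℂ) ≠ 0 := by simp [hp, hN]
  have hexp : Real.pi * Complex.I * ((k + 2 * p * N : ℤ) : ℂ) ^ 2 / (2 * p * N) =
      Real.pi * Complex.I * (k : ℂ) ^ 2 / (2 * p * N) +
        (k + p * N : ℤ) * (2 * Real.pi * Complex.I) := by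
    field_simp
    push_cast
    ring
  rw [psiTwist, psiTwist, hexp, Complex.exp_add, Complex.exp_int_mul_two_pi_mul_I, mul_one,
    mul_comm (2 * p), ← smul_eq_mul (N : ℤ), (psi_periodic p a).zsmul]

theorem psiTwist_neg {p a : ℤ} (h : ¬a ≡ -a [ZMOD 2 * p]) (N : ℕ) (k : ℤ) :
    psiTwist p a N (-k) = -psiTwist p a N k := by
  simp [psiTwist, psi_neg h]

theorem psi_mul_exp_eq_gaussWeight_smul_psiTwist {p : ℤ} (hp : p ≠ 0) (a : ℤ) {N : ℕ}
    (hN : N ≠ 0) (ε : ℝ) (k : ℕ) :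
    (psi p a k : ℂ) * Complex.exp (2 * Real.pi * Complex.I * ((1 / N : ℂ) + Complex.I * ε) *
      (k : ℂ) ^ 2 / (4 * p)) = gaussWeight (Real.pi / (2 * p) * ε) k • psiTwist p a N (k : ℤ) := by
  have hp' : (p : ℂ) ≠ 0 := Int.cast_ne_zero.2 hp
  have hN' : (N : ℂ) ≠ 0 := Nat.cast_ne_zero.2 hN
  rw [Complex.real_smul, gaussWeight, psiTwist, Complex.ofReal_exp, mul_left_comm,
    ← Complex.exp_add]
  congr 2
  push_cast
  field_simp
  ring_nf
  rw [Complex.I_sq]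
  ring

theorem statement11 (p a : ℤ) (ha : 0 < a) (hap : a < p) (N : ℕ) (hN : 0 < N) :
    Tendsto (fun ε : ℝ =>
        ∑' k : ℕ, (psi p a k : ℂ) *
          Complex.exp (2 * Real.pi * Complex.I * ((1 / N : ℂ) + Complex.I * ε) *
            (k : ℂ) ^ 2 / (4 * p)))
      (nhdsWithin 0 (Set.Ioi 0))
      (nhds (-∑ k ∈ Finset.Icc (1 : ℤ) (2 * p * N),
        (psi p a k : ℂ) * Complex.exp (Real.pi * Complex.I * (k : ℂ) ^ 2 / (2 * p * N)) *
          ((k : ℂ) / (2 * p * N) - 1 / 2))) := by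
  have hp : 0 < p := ha.trans hap
  obtain ⟨M, hM⟩ : ∃ M : ℕ, (M : ℤ) = 2 * p * N := ⟨_, Int.toNat_of_nonneg (by positivity)⟩
  have hM₀ : 0 < M := by rw [← Nat.cast_pos (α := ℤ), hM]; positivity
  set F := psiTwist p a N
  have hper : Periodic F M := hM ▸ psiTwist_periodic hp.ne' a (by omega)
  have hodd : ∀ k, F (-k) = -F k := psiTwist_neg (not_modEq_neg_of_pos_of_lt ha hap) N
  have hsum : ∑ k ∈ range M, F k = 0 := sum_range_eq_zero_of_periodic_of_odd hper hodd
  have hlim := tendsto_tsum_gaussWeight_smul_of_periodic hM₀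
    (f := fun k : ℕ => F k) (fun k => by simpa using hper k) hsum
  have hscale : Tendsto (fun ε : ℝ => Real.pi / (2 * p) * ε) (𝓝[>] 0) (𝓝[>] 0) :=
    tendsto_comap.mono_left (comap_mulLeft_nhdsGT_zero (by positivity)).ge
  convert hlim.comp hscale using 2
  · exact tsum_congr (psi_mul_exp_eq_gaussWeight_smul_psiTwist hp.ne' a (by omega) _)
  · have hF₀ : F 0 = 0 := self_eq_neg.1 (hodd 0)
    have hFM : F M = 0 := by simpa [hF₀] using hper 0
    have hMC : (M : ℂ) = 2 * p * N := by exact_mod_cast congrArg (Int.cast : ℤ → ℂ) hM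
    calc _ = -∑ k ∈ Icc (1 : ℤ) M, F k * ((k : ℂ) / M - 1 / 2) := by rw [hM, hMC]; rfl
      _ = _ := by
        rw [sum_Icc_mul_sub_half_eq hF₀ hFM hsum]
        simp [Complex.real_smul]
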